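/- Let U be a finite set partitioned into G_1, …, G_k, let v : 2^U → ℝ≥0 be a monotone, normalized XOS valuation, let each player i have a monotone normalized cost function c_i : 2^{G_i} → ℝ≥0 with c(S) := Σ_i c_i(S ∩ G_i), let B > 0, and assume c({e}) ≤ B for every e ∈ U (no-overbidding). Draw ω uniformly from {1,2}^{[k]}, set U_j(ω) := ⋃_{i : ω(i)=j} G_i, let V_1(ω) := max{vbench(S) : S ⊆ U_1(ω), c(S) ≤ B}, let S*(ω) be any maximizer of v(S) − (V_1(ω)/(2B))·c(S) over {S ⊆ U_2(ω) : v(S) ≤ V_1(ω)/2}, and let e* be any maximizer of v({e}) over e ∈ U. Then E_ω[ (4/5)·v(S*(ω)) + (1/5)·v({e*}) ] ≥ (1/80) · max{ v(S) − 5·max_{i∈[k]} v(S ∩ G_i) : S ⊆ U, c(S) ≤ B }. -/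
import Mathlib


open Finset
open scoped Classical

/-- The items owned by the players given label `j` by the labeling `ω`. -/
def sideSet {n k : ℕ} (G : Fin k → Finset (Fin n)) (ω : Fin k → Fin 2) (j : Fin 2) :
    Finset (Fin n) :=
  (Finset.univ.filter fun i => ω i = j).biUnion G

/-- Total cost `c(S) = ∑_i c_i (S ∩ G_i)`. -/
def totalCost {n k : ℕ} (G : Fin k → Finset (Fin n))
    (c : Fin k → Finset (Fin n) → ℝ) (S : Finset (Fin n)) : ℝ :=
  ∑ i, c i (S ∩ G i)

/-- `V_1(ω)`: the benchmark value `max{vbench S : S ⊆ U_1(ω), c S ≤ B}` computed on the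
sampled part. -/
noncomputable def V1 {n k : ℕ} (G : Fin k → Finset (Fin n))
    (v : Finset (Fin n) → ℝ) (c : Fin k → Finset (Fin n) → ℝ) (B : ℝ)
    (ω : Fin k → Fin 2) : ℝ :=
  sSup {x : ℝ | ∃ S : Finset (Fin n), S ⊆ sideSet G ω 0 ∧ totalCost G c S ≤ B ∧
    x = v S - sSup {y : ℝ | ∃ i : Fin k, y = v (S ∩ G i)}}

noncomputable def msup {n k : ℕ} (G : Fin k → Finset (Fin n)) (v : Finset (Fin n) → ℝ)
    (S : Finset (Fin n)) : ℝ := sSup {y : ℝ | ∃ i : Fin k, y = v (S ∩ G i)}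

/-- discrete IVT trimming -/
lemma exists_trim {n : ℕ} (v : Finset (Fin n) → ℝ) (hv0 : v ∅ = 0)
    (hsub : ∀ (X : Finset (Fin n)) (e : Fin n), e ∉ X → v (insert e X) ≤ v X + v {e})
    (C g : ℝ) (hC : 0 ≤ C) (hg : 0 ≤ g) :
    ∀ (X : Finset (Fin n)), (∀ e ∈ X, v {e} ≤ g) →
      ∃ R ⊆ X, v R ≤ C ∧ min (v X) (C - g) ≤ v R := by
  intro X
  induction X using Finset.strongInduction with
  | _ X ih =>
    intro hX
    by_cases h1 : v X ≤ C
    · exact ⟨X, Finset.Subset.refl X, h1, min_le_left _ _⟩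
    · push_neg at h1
      have hXne : X.Nonempty := by
        rcases Finset.eq_empty_or_nonempty X with h | h
        · exfalso; rw [h, hv0] at h1; linarith
        · exact h
      obtain ⟨e, he⟩ := hXne
      have hins : insert e (X.erase e) = X := Finset.insert_erase he
      have hsub' : v X ≤ v (X.erase e) + v {e} := by
        nth_rewrite 1 [← hins]
        exact hsub _ _ (Finset.notMem_erase e X)
      by_cases h2 : v (X.erase e) ≤ C
      · refine ⟨X.erase e, Finset.erase_subset e X, h2, ?_⟩
        have h4 : v {e} ≤ g := hX e he
        have h5 : C - g ≤ v (X.erase e) := by linarith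
        exact le_trans (min_le_right _ _) h5
      · obtain ⟨R, hR1, hR2, hR3⟩ := ih (X.erase e) (Finset.erase_ssubset he)
          (fun e' he' => hX e' (Finset.mem_of_mem_erase he'))
        refine ⟨R, hR1.trans (Finset.erase_subset e X), hR2, ?_⟩
        push_neg at h2
        have h6 : min (v (X.erase e)) (C - g) = C - g := min_eq_right (by linarith)
        rw [h6] at hR3
        exact le_trans (min_le_right _ _) hR3

/-- density-sorted prefix existence -/
lemma exists_prefix {k : ℕ} (a s : Fin k → ℝ) :
    ∀ (I : Finset (Fin k)), (∀ i ∈ I, 0 < a i) → (∀ i ∈ I, 0 ≤ s i) →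
    ∀ (t b : ℝ), 0 ≤ t → 0 ≤ b → (∀ i ∈ I, a i ≤ b) → t ≤ ∑ i ∈ I, a i →
      ∃ P ⊆ I, (t ≤ ∑ i ∈ P, a i) ∧ (∑ i ∈ P, a i ≤ t + b) ∧
        ∀ i ∈ P, ∀ j ∈ I \ P, s i * a j ≤ a i * s j := by
  intro I
  induction I using Finset.strongInduction with
  | _ I ih =>
    intro ha hs t b ht hb hab htot
    rcases Finset.eq_empty_or_nonempty I with hI | hI
    · refine ⟨∅, Finset.empty_subset I, ?_, by simpa using by linarith, by simp⟩
      simpa using le_trans htot (by simp [hI])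
    · obtain ⟨i0, hi0I, hi0min⟩ := I.exists_min_image (fun i => s i / a i) hI
      have hd0 : ∀ j ∈ I, s i0 * a j ≤ a i0 * s j := by
        intro j hj
        have h1 := hi0min j hj
        rw [div_le_div_iff₀ (ha i0 hi0I) (ha j hj)] at h1
        linarith
      by_cases hta : t ≤ a i0
      · refine ⟨{i0}, by simpa using hi0I, by simpa using hta, ?_, ?_⟩
        · simpa using le_trans (hab i0 hi0I) (by linarith)
        · intro i hi j hj
          rw [Finset.mem_singleton] at hi
          subst hi
          exact hd0 j (Finset.mem_sdiff.mp hj).1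
      · push_neg at hta
        have herase : I.erase i0 ⊂ I := Finset.erase_ssubset hi0I
        have hsum : ∑ i ∈ I.erase i0, a i = (∑ i ∈ I, a i) - a i0 := by
          rw [← Finset.sum_erase_add I a hi0I]; ring
        obtain ⟨P', hP'1, hP'2, hP'3, hP'4⟩ := ih (I.erase i0) herase
          (fun i hi => ha i (Finset.mem_of_mem_erase hi))
          (fun i hi => hs i (Finset.mem_of_mem_erase hi))
          (t - a i0) b (by linarith [ha i0 hi0I]) hb
          (fun i hi => hab i (Finset.mem_of_mem_erase hi))
          (by rw [hsum]; linarith)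
        have hi0P' : i0 ∉ P' := fun h => (Finset.notMem_erase i0 I) (hP'1 h)
        refine ⟨insert i0 P', ?_, ?_, ?_, ?_⟩
        · intro x hx
          rcases Finset.mem_insert.mp hx with h | h
          · exact h ▸ hi0I
          · exact Finset.mem_of_mem_erase (hP'1 h)
        · rw [Finset.sum_insert hi0P']; linarith
        · rw [Finset.sum_insert hi0P']; linarith
        · intro i hi j hj
          have hjI : j ∈ I := (Finset.mem_sdiff.mp hj).1
          have hjP : j ∉ insert i0 P' := (Finset.mem_sdiff.mp hj).2
          rcases Finset.mem_insert.mp hi with h | h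
          · exact h ▸ hd0 j hjI
          · refine hP'4 i h j (Finset.mem_sdiff.mpr ⟨?_, ?_⟩)
            · exact Finset.mem_erase.mpr ⟨fun hji => hjP (hji ▸ Finset.mem_insert_self i0 P'), hjI⟩
            · exact fun hjP' => hjP (Finset.mem_insert_of_mem hjP')

/-- prefix density corollary -/
lemma prefix_cost {k : ℕ} (a s : Fin k → ℝ) (I P : Finset (Fin k)) (hPI : P ⊆ I)
    (hd : ∀ i ∈ P, ∀ j ∈ I \ P, s i * a j ≤ a i * s j) :
    (∑ i ∈ P, s i) * (∑ i ∈ I, a i) ≤ (∑ i ∈ P, a i) * (∑ i ∈ I, s i) := by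
  have hsplit_a : ∑ i ∈ I, a i = (∑ i ∈ P, a i) + ∑ i ∈ I \ P, a i := by
    rw [← Finset.sum_sdiff hPI]; ring
  have hsplit_s : ∑ i ∈ I, s i = (∑ i ∈ P, s i) + ∑ i ∈ I \ P, s i := by
    rw [← Finset.sum_sdiff hPI]; ring
  rw [hsplit_a, hsplit_s]
  have key : (∑ i ∈ P, s i) * (∑ j ∈ I \ P, a j) ≤ (∑ i ∈ P, a i) * (∑ j ∈ I \ P, s j) := by
    rw [Finset.sum_mul_sum, Finset.sum_mul_sum]
    refine Finset.sum_le_sum ?_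
    intro i hi
    exact Finset.sum_le_sum fun j hj => hd i hi j hj
  nlinarith [key]

section helpers
variable {n k : ℕ} (G : Fin k → Finset (Fin n))
  (hdisj : ∀ i j : Fin k, i ≠ j → Disjoint (G i) (G j))
  (hcover : Finset.univ.biUnion G = (Finset.univ : Finset (Fin n)))

lemma biUnion_eq (X : Finset (Fin n)) (T : Finset (Fin k)) :
    T.biUnion (fun i => X ∩ G i) = X ∩ T.biUnion G := by
  ext e
  simp only [Finset.mem_biUnion, Finset.mem_inter]
  constructor
  · rintro ⟨i, hi, he, hg⟩; exact ⟨he, i, hi, hg⟩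
  · rintro ⟨he, i, hi, hg⟩; exact ⟨i, hi, he, hg⟩

include hdisj in
lemma sum_over_biUnion (X : Finset (Fin n)) (T : Finset (Fin k)) (f : Fin n → ℝ) :
    ∑ e ∈ X ∩ T.biUnion G, f e = ∑ i ∈ T, ∑ e ∈ X ∩ G i, f e := by
  rw [← biUnion_eq]
  refine Finset.sum_biUnion ?_
  intro i hi j hj hij
  exact Finset.disjoint_of_subset_left Finset.inter_subset_right
    (Finset.disjoint_of_subset_right Finset.inter_subset_right (hdisj i j hij))

include hdisj hcover in
lemma sum_partition (X : Finset (Fin n)) (f : Fin n → ℝ) :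
    ∑ e ∈ X, f e = ∑ i, ∑ e ∈ X ∩ G i, f e := by
  have := sum_over_biUnion G hdisj X Finset.univ f
  rwa [hcover, Finset.inter_univ] at this

include hdisj in
lemma sum_side (X : Finset (Fin n)) (ω : Fin k → Fin 2) (j : Fin 2) (f : Fin n → ℝ) :
    ∑ e ∈ X ∩ sideSet G ω j, f e
      = ∑ i ∈ Finset.univ.filter (fun i => ω i = j), ∑ e ∈ X ∩ G i, f e :=
  sum_over_biUnion G hdisj X _ f

end helpers

lemma orth {k : ℕ} (i j : Fin k) (hij : i ≠ j) :
    ∑ ω : Fin k → Fin 2, ((if ω i = 0 then (1/2 : ℝ) else -1/2) *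
      (if ω j = 0 then (1/2 : ℝ) else -1/2)) = 0 := by
  classical
  refine Finset.sum_involution
    (fun ω _ => Function.update ω i (if ω i = 0 then 1 else 0)) ?_ ?_ ?_ ?_
  · intro ω hω
    rw [Function.update_of_ne (Ne.symm hij), Function.update_self]
    by_cases h : ω i = 0 <;> by_cases h' : ω j = 0 <;> simp [h, h'] <;> ring
  · intro ω _ _ hcon
    have h3 := congrFun hcon i
    rw [Function.update_self] at h3
    by_cases h : ω i = 0
    · rw [h] at h3; simp [h] at h3
    · simp [h] at h3; exact h h3.symm
  · intro ω _; exact Finset.mem_univ _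
  · intro ω _
    funext x
    by_cases hx : x = i
    · subst hx
      rw [Function.update_self, Function.update_self]
      rcases (show ω x = 0 ∨ ω x = 1 by omega) with h | h <;> simp [h]
    · rw [Function.update_of_ne hx, Function.update_of_ne hx]

section sSupHelpers
variable {n k : ℕ} (hk : 0 < k) (G : Fin k → Finset (Fin n)) (v : Finset (Fin n) → ℝ)
  (c : Fin k → Finset (Fin n) → ℝ) (B : ℝ)

lemma msup_finite (S : Finset (Fin n)) :
    {y : ℝ | ∃ i : Fin k, y = v (S ∩ G i)}.Finite := by
  have h : {y : ℝ | ∃ i : Fin k, y = v (S ∩ G i)} = Set.range (fun i => v (S ∩ G i)) := by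
    ext y; simp [Set.mem_range, eq_comm]
  rw [h]; exact Set.finite_range _

include hk in
lemma msup_nonempty (S : Finset (Fin n)) :
    {y : ℝ | ∃ i : Fin k, y = v (S ∩ G i)}.Nonempty :=
  ⟨v (S ∩ G ⟨0, hk⟩), ⟨⟨0, hk⟩, rfl⟩⟩

lemma msup_ge (S : Finset (Fin n)) (i : Fin k) : v (S ∩ G i) ≤ msup G v S :=
  le_csSup (msup_finite G v S).bddAbove ⟨i, rfl⟩

include hk in
lemma msup_attained (S : Finset (Fin n)) : ∃ i : Fin k, msup G v S = v (S ∩ G i) :=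
  (msup_nonempty hk G v S).csSup_mem (msup_finite G v S)

include hk in
lemma msup_le (S : Finset (Fin n)) (z : ℝ) (h : ∀ i, v (S ∩ G i) ≤ z) : msup G v S ≤ z := by
  refine csSup_le (msup_nonempty hk G v S) ?_
  rintro y ⟨i, rfl⟩; exact h i

lemma V1_set_finite (ω : Fin k → Fin 2) :
    {x : ℝ | ∃ S : Finset (Fin n), S ⊆ sideSet G ω 0 ∧ totalCost G c S ≤ B ∧
      x = v S - sSup {y : ℝ | ∃ i : Fin k, y = v (S ∩ G i)}}.Finite := by
  refine Set.Finite.subset (Set.finite_range (fun S : Finset (Fin n) =>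
    v S - sSup {y : ℝ | ∃ i : Fin k, y = v (S ∩ G i)})) ?_
  rintro x ⟨S, _, _, rfl⟩; exact ⟨S, rfl⟩

lemma V1_mem (ω : Fin k → Fin 2) (S : Finset (Fin n)) (h1 : S ⊆ sideSet G ω 0)
    (h2 : totalCost G c S ≤ B) : v S - msup G v S ≤ V1 G v c B ω :=
  le_csSup (V1_set_finite G v c B ω).bddAbove ⟨S, h1, h2, rfl⟩

lemma V1_attained (hc0 : ∀ i, c i ∅ = 0) (hB : 0 ≤ B) (ω : Fin k → Fin 2) :
    ∃ S : Finset (Fin n), S ⊆ sideSet G ω 0 ∧ totalCost G c S ≤ B ∧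
      V1 G v c B ω = v S - msup G v S := by
  have hne : {x : ℝ | ∃ S : Finset (Fin n), S ⊆ sideSet G ω 0 ∧ totalCost G c S ≤ B ∧
      x = v S - sSup {y : ℝ | ∃ i : Fin k, y = v (S ∩ G i)}}.Nonempty := by
    refine ⟨v (∅ : Finset (Fin n)) - msup G v ∅, ∅, Finset.empty_subset _, ?_, rfl⟩
    simp [totalCost, hc0]; exact hB
  obtain ⟨S, h1, h2, h3⟩ := hne.csSup_mem (V1_set_finite G v c B ω)
  exact ⟨S, h1, h2, h3⟩

include hk in
lemma V1_nonneg (hc0 : ∀ i, c i ∅ = 0) (hB : 0 ≤ B) (hv0 : v ∅ = 0) (ω : Fin k → Fin 2) :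
    0 ≤ V1 G v c B ω := by
  have h0 : v (∅ : Finset (Fin n)) - msup G v ∅ ≤ V1 G v c B ω := by
    refine V1_mem G v c B ω ∅ (Finset.empty_subset _) ?_
    simp [totalCost, hc0]; exact hB
  have h1 : msup G v (∅ : Finset (Fin n)) = 0 := by
    obtain ⟨i, hi⟩ := msup_attained hk G v ∅
    rw [hi, Finset.empty_inter, hv0]
  rw [h1, hv0] at h0; linarith
end sSupHelpers

def flp {k : ℕ} (ω : Fin k → Fin 2) : Fin k → Fin 2 := fun i => if ω i = 0 then 1 else 0

lemma flp_flp {k : ℕ} (ω : Fin k → Fin 2) : flp (flp ω) = ω := by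
  funext i; unfold flp
  rcases (show ω i = 0 ∨ ω i = 1 by omega) with h | h <;> simp [h]

lemma flp_side {n k : ℕ} (G : Fin k → Finset (Fin n)) (ω : Fin k → Fin 2) :
    sideSet G (flp ω) 0 = sideSet G ω 1 := by
  unfold sideSet
  congr 1
  apply Finset.filter_congr
  intro i _
  unfold flp
  rcases (show ω i = 0 ∨ ω i = 1 by omega) with h | h <;> simp [h]

lemma sum_flp {k : ℕ} (f : (Fin k → Fin 2) → ℝ) :
    ∑ ω : Fin k → Fin 2, f (flp ω) = ∑ ω : Fin k → Fin 2, f ω :=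
  Fintype.sum_bijective flp (Function.Involutive.bijective flp_flp) _ _ (fun ω => rfl)

section xos
variable {n : ℕ} (v : Finset (Fin n) → ℝ)
  (hvmono : ∀ S T : Finset (Fin n), S ⊆ T → v S ≤ v T)
  (hxos : ∀ S : Finset (Fin n), ∃ w : Fin n → ℝ,
      (∑ e ∈ S, w e) = v S ∧ ∀ T ⊆ S, (∑ e ∈ T, w e) ≤ v T)

include hvmono in
lemma w_nonneg (S : Finset (Fin n)) (w : Fin n → ℝ) (hw1 : (∑ e ∈ S, w e) = v S)
    (hw2 : ∀ T ⊆ S, (∑ e ∈ T, w e) ≤ v T) (e : Fin n) (he : e ∈ S) : 0 ≤ w e := by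
  have h1 : (∑ x ∈ S.erase e, w x) + w e = ∑ x ∈ S, w x := Finset.sum_erase_add S w he
  have h2 : (∑ x ∈ S.erase e, w x) ≤ v (S.erase e) := hw2 _ (Finset.erase_subset e S)
  have h3 : v (S.erase e) ≤ v S := hvmono _ _ (Finset.erase_subset e S)
  linarith [hw1 ▸ h1]

include hxos in
lemma subadd_insert (X : Finset (Fin n)) (e : Fin n) (he : e ∉ X) :
    v (insert e X) ≤ v X + v {e} := by
  obtain ⟨w, hw1, hw2⟩ := hxos (insert e X)
  have h1 : (∑ x ∈ insert e X, w x) = w e + ∑ x ∈ X, w x := Finset.sum_insert he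
  have h2 : (∑ x ∈ X, w x) ≤ v X := hw2 _ (Finset.subset_insert e X)
  have h3 : (∑ x ∈ ({e} : Finset (Fin n)), w x) ≤ v {e} := by
    refine hw2 _ ?_
    intro x hx; rw [Finset.mem_singleton] at hx; rw [hx]; exact Finset.mem_insert_self e X
  rw [Finset.sum_singleton] at h3
  linarith [hw1 ▸ h1]
end xos

section main
variable {n k : ℕ} (hk : 0 < k) (G : Fin k → Finset (Fin n))
    (hdisj : ∀ i j : Fin k, i ≠ j → Disjoint (G i) (G j))
    (hcover : Finset.univ.biUnion G = (Finset.univ : Finset (Fin n)))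
    (v : Finset (Fin n) → ℝ) (hv0 : v ∅ = 0) (hvnn : ∀ S, 0 ≤ v S)
    (hvmono : ∀ S T : Finset (Fin n), S ⊆ T → v S ≤ v T)
    (hxos : ∀ S : Finset (Fin n), ∃ w : Fin n → ℝ,
      (∑ e ∈ S, w e) = v S ∧ ∀ T ⊆ S, (∑ e ∈ T, w e) ≤ v T)
    (c : Fin k → Finset (Fin n) → ℝ)
    (hc0 : ∀ i, c i ∅ = 0)
    (hcnn : ∀ i (S : Finset (Fin n)), S ⊆ G i → 0 ≤ c i S)
    (hcmono : ∀ i (S T : Finset (Fin n)), S ⊆ T → T ⊆ G i → c i S ≤ c i T)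
    (B : ℝ) (hB : 0 < B)
    (Sstar : (Fin k → Fin 2) → Finset (Fin n))
    (hSstar : ∀ ω, Sstar ω ⊆ sideSet G ω 1 ∧ v (Sstar ω) ≤ V1 G v c B ω / 2 ∧
      ∀ S ⊆ sideSet G ω 1, v S ≤ V1 G v c B ω / 2 →
        v S - V1 G v c B ω / (2 * B) * totalCost G c S ≤
          v (Sstar ω) - V1 G v c B ω / (2 * B) * totalCost G c (Sstar ω))
    (estar : Fin n) (hestar : ∀ e : Fin n, v {e} ≤ v {estar})

include hcnn in
lemma totalCost_nonneg (X : Finset (Fin n)) : 0 ≤ totalCost G c X :=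
  Finset.sum_nonneg fun i _ => hcnn i _ Finset.inter_subset_right

include hcmono in
lemma totalCost_mono (X Y : Finset (Fin n)) (hXY : X ⊆ Y) :
    totalCost G c X ≤ totalCost G c Y :=
  Finset.sum_le_sum fun i _ =>
    hcmono i _ _ (Finset.inter_subset_inter hXY (Finset.Subset.refl _)) Finset.inter_subset_right

include hk hv0 hcnn hc0 hB hSstar in
lemma demand (ω : Fin k → Fin 2) (R : Finset (Fin n)) (hR : R ⊆ sideSet G ω 1)
    (hcap : v R ≤ V1 G v c B ω / 2) :
    v R - V1 G v c B ω / (2 * B) * totalCost G c R ≤ v (Sstar ω) := by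
  have h1 := (hSstar ω).2.2 R hR hcap
  have hθ : 0 ≤ V1 G v c B ω / (2 * B) :=
    div_nonneg (V1_nonneg hk G v c B hc0 hB.le hv0 ω) (by linarith)
  have h2 : 0 ≤ totalCost G c (Sstar ω) := totalCost_nonneg G c hcnn _
  nlinarith [mul_nonneg hθ h2]

include hk hv0 hcnn hc0 hB hSstar in
lemma vSstar_nonneg (ω : Fin k → Fin 2) : 0 ≤ v (Sstar ω) := by
  have := demand hk G v hv0 c hc0 hcnn B hB Sstar hSstar ω ∅ (Finset.empty_subset _)
    (by rw [hv0]; exact div_nonneg (V1_nonneg hk G v c B hc0 hB.le hv0 ω) (by norm_num))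
  have hc : totalCost G c (∅ : Finset (Fin n)) = 0 := by simp [totalCost, hc0]
  rw [hv0, hc] at this
  simpa using this
end main

lemma key_arith (A B x al sj SP : ℝ) (hB : 0 < B) (hA : 0 < A)
    (hal0 : 0 ≤ al) (hthin : al ≤ 11/32*A) (hsj : 0 ≤ sj) (hsjB : sj ≤ B)
    (hSP : 0 ≤ SP)
    (hSPA : SP * A ≤ (11/32*A + al) * (B - sj))
    (hfA : 11/32*A - A/(2*B)*SP ≤ x)
    (hfB : al - A/(2*B)*sj ≤ x) : 5/64*A ≤ x := by
  by_cases hdich : 5/64*A ≤ al - A/(2*B)*sj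
  · linarith
  · push_neg at hdich
    have h2B : (0:ℝ) < 2*B := by linarith
    have hmain1 : (11/32*A - x) * (2*B) ≤ (11/32*A + al) * (B - sj) := by
      have h1 : 11/32*A - x ≤ A/(2*B)*SP := by linarith
      have h2 := mul_le_mul_of_nonneg_right h1 h2B.le
      have h3 : (A/(2*B)*SP) * (2*B) = A * SP := by field_simp
      nlinarith [hSPA]
    have hmain2 : (al - 5/64*A) * (2*B) ≤ A * sj := by
      have h1 : al - 5/64*A ≤ A/(2*B)*sj := by linarith
      have h2 := mul_le_mul_of_nonneg_right h1 h2B.le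
      have h3 : (A/(2*B)*sj) * (2*B) = A * sj := by field_simp
      linarith
    nlinarith [hmain1, hmain2, sq_nonneg (al - 15/128*A), mul_pos hA hB,
      mul_le_mul_of_nonneg_left hmain2 (show (0:ℝ) ≤ 11/32*A + al by linarith)]

section keysec
variable {n k : ℕ} (hk : 0 < k) (G : Fin k → Finset (Fin n))
    (hdisj : ∀ i j : Fin k, i ≠ j → Disjoint (G i) (G j))
    (hcover : Finset.univ.biUnion G = (Finset.univ : Finset (Fin n)))
    (v : Finset (Fin n) → ℝ) (hv0 : v ∅ = 0) (hvnn : ∀ S, 0 ≤ v S)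
    (hvmono : ∀ S T : Finset (Fin n), S ⊆ T → v S ≤ v T)
    (hxos : ∀ S : Finset (Fin n), ∃ w : Fin n → ℝ,
      (∑ e ∈ S, w e) = v S ∧ ∀ T ⊆ S, (∑ e ∈ T, w e) ≤ v T)
    (c : Fin k → Finset (Fin n) → ℝ)
    (hc0 : ∀ i, c i ∅ = 0)
    (hcnn : ∀ i (S : Finset (Fin n)), S ⊆ G i → 0 ≤ c i S)
    (hcmono : ∀ i (S T : Finset (Fin n)), S ⊆ T → T ⊆ G i → c i S ≤ c i T)
    (B : ℝ) (hB : 0 < B)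
    (Sstar : (Fin k → Fin 2) → Finset (Fin n))
    (hSstar : ∀ ω, Sstar ω ⊆ sideSet G ω 1 ∧ v (Sstar ω) ≤ V1 G v c B ω / 2 ∧
      ∀ S ⊆ sideSet G ω 1, v S ≤ V1 G v c B ω / 2 →
        v S - V1 G v c B ω / (2 * B) * totalCost G c S ≤
          v (Sstar ω) - V1 G v c B ω / (2 * B) * totalCost G c (Sstar ω))
    (estar : Fin n) (hestar : ∀ e : Fin n, v {e} ≤ v {estar})

include hk hdisj hcover hv0 hvnn hvmono hxos hc0 hcnn hcmono hB hSstar hestar in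
lemma key (ω : Fin k → Fin 2) (hle : V1 G v c B ω ≤ V1 G v c B (flp ω)) :
    V1 G v c B ω / 16 ≤ 4/5 * v (Sstar ω) + 2/5 * v {estar} := by
  classical
  have hA0 : 0 ≤ V1 G v c B ω := V1_nonneg hk G v c B hc0 hB.le hv0 ω
  have hSst0 : 0 ≤ v (Sstar ω) := vSstar_nonneg hk G v hv0 c hc0 hcnn B hB Sstar hSstar ω
  have hes0 : 0 ≤ v {estar} := hvnn _
  set A := V1 G v c B ω with hAdef
  rcases le_or_gt (5/32 * A) (v {estar}) with hbig | hsmall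
  · linarith
  have hApos : 0 < A := by nlinarith
  have helem : ∀ e : Fin n, v {e} ≤ 5/32 * A :=
    fun e => le_of_lt (lt_of_le_of_lt (hestar e) hsmall)
  have hθ : 0 ≤ A / (2*B) := div_nonneg hA0 (by linarith)
  suffices hgoal : 5/64 * A ≤ v (Sstar ω) by linarith
  -- witness O of the benchmark on the demand side
  obtain ⟨O, hOside0, hOcost, hOval⟩ := V1_attained G v c B hc0 hB.le (flp ω)
  rw [flp_side] at hOside0
  have hbench : A ≤ v O - msup G v O := by rw [← hOval]; exact hle
  obtain ⟨js, hjs⟩ := msup_attained hk G v O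
  have hmu : ∀ i, v (O ∩ G i) ≤ v (O ∩ G js) := by
    intro i; rw [← hjs]; exact msup_ge G v O i
  obtain ⟨w, hw1, hw2⟩ := hxos O
  set a : Fin k → ℝ := fun i => ∑ e ∈ O ∩ G i, w e with ha_def
  set s : Fin k → ℝ := fun i => c i (O ∩ G i) with hs_def
  have hwnn : ∀ e ∈ O, 0 ≤ w e := fun e he => w_nonneg v hvmono O w hw1 hw2 e he
  have ha_nn : ∀ i, 0 ≤ a i :=
    fun i => Finset.sum_nonneg fun e he => hwnn e (Finset.mem_inter.mp he).1
  have ha_le : ∀ i, a i ≤ v (O ∩ G i) := fun i => hw2 _ Finset.inter_subset_left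
  have hs_nn : ∀ i, 0 ≤ s i := fun i => hcnn i _ Finset.inter_subset_right
  have ha_sum : ∑ i, a i = v O := by
    rw [← hw1]; exact (sum_partition G hdisj hcover O w).symm
  have hs_sum : ∑ i, s i = totalCost G c O := rfl
  -- demand primitive
  have hdemand : ∀ R : Finset (Fin n), R ⊆ O → v R ≤ A/2 →
      v R - A/(2*B) * totalCost G c R ≤ v (Sstar ω) := by
    intro R hRO hcap
    exact demand hk G v hv0 c hc0 hcnn B hB Sstar hSstar ω R (hRO.trans hOside0) hcap
  have hsubins : ∀ (X : Finset (Fin n)) (e : Fin n), e ∉ X → v (insert e X) ≤ v X + v {e} :=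
    fun X e he => subadd_insert v hxos X e he
  -- single-player extraction
  have hE1 : ∀ i : Fin k, min (v (O ∩ G i)) (11/32 * A) - A/(2*B) * s i ≤ v (Sstar ω) := by
    intro i
    obtain ⟨R, hRX, hRcap, hRlow⟩ := exists_trim v hv0 hsubins (A/2) (5/32*A)
      (by linarith) (by linarith) (O ∩ G i) (fun e _ => helem e)
    have hRG : R ⊆ G i := hRX.trans Finset.inter_subset_right
    have hcostR : totalCost G c R ≤ s i := by
      unfold totalCost
      rw [Finset.sum_eq_single i]
      · have hRR : R ∩ G i = R := Finset.inter_eq_left.mpr hRG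
        rw [hRR]
        exact hcmono i R (O ∩ G i) hRX Finset.inter_subset_right
      · intro j _ hji
        have hRj : R ∩ G j = ∅ := by
          refine Finset.eq_empty_of_forall_notMem ?_
          intro e he
          obtain ⟨he1, he2⟩ := Finset.mem_inter.mp he
          exact Finset.disjoint_left.mp (hdisj i j (Ne.symm hji)) (hRG he1) he2
        rw [hRj, hc0 j]
      · intro h; exact absurd (Finset.mem_univ i) h
    have hdem := hdemand R (hRX.trans Finset.inter_subset_left) hRcap
    have hc2 : A/(2*B) * totalCost G c R ≤ A/(2*B) * s i :=
      mul_le_mul_of_nonneg_left hcostR hθ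
    have hmin : min (v (O ∩ G i)) (11/32*A) ≤ v R := by
      have h32 : A/2 - 5/32*A = 11/32*A := by ring
      rw [← h32]; exact hRlow
    linarith
  -- the rest (mass outside the top-value player)
  have hsum_erase : ∑ i ∈ Finset.univ.erase js, a i = v O - a js := by
    have h := Finset.sum_erase_add Finset.univ a (Finset.mem_univ js)
    rw [ha_sum] at h; linarith
  have hMR : A ≤ ∑ i ∈ Finset.univ.erase js, a i := by
    have h1 : a js ≤ v (O ∩ G js) := ha_le js
    rw [hjs] at hbench
    linarith [hsum_erase]
  have hne : (Finset.univ.erase js).Nonempty := by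
    by_contra h
    rw [Finset.not_nonempty_iff_eq_empty] at h
    rw [h, Finset.sum_empty] at hMR
    linarith
  obtain ⟨l, hlmem, hlmax⟩ := (Finset.univ.erase js).exists_max_image a hne
  have hljs : l ≠ js := Finset.ne_of_mem_erase hlmem
  have hnul : a l ≤ v (O ∩ G l) := ha_le l
  have hpair : s l + s js ≤ B := by
    have h1 : ∑ i ∈ ({l, js} : Finset (Fin k)), s i ≤ ∑ i, s i :=
      Finset.sum_le_sum_of_subset_of_nonneg (Finset.subset_univ _) (fun i _ _ => hs_nn i)
    rw [Finset.sum_pair hljs, hs_sum] at h1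
    linarith
  rcases le_or_gt (11/32*A) (a l) with hfat | hthin
  · -- two big players
    have hv_l : 11/32*A ≤ v (O ∩ G l) := le_trans hfat hnul
    have hv_js : 11/32*A ≤ v (O ∩ G js) := le_trans hv_l (hmu l)
    have hq : A/(2*B) * (B/2) = A/4 := by field_simp; ring
    rcases le_or_gt (s l) (B/2) with hcase | hcase
    · have h1 := hE1 l
      rw [min_eq_right hv_l] at h1
      have h2 : A/(2*B) * s l ≤ A/4 := by
        have := mul_le_mul_of_nonneg_left hcase hθ
        linarith [hq]
      linarith
    · have hjs2 : s js ≤ B/2 := by linarith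
      have h1 := hE1 js
      rw [min_eq_right hv_js] at h1
      have h2 : A/(2*B) * s js ≤ A/4 := by
        have := mul_le_mul_of_nonneg_left hjs2 hθ
        linarith [hq]
      linarith
  · -- prefix case
    set I := (Finset.univ.erase js).filter (fun i => 0 < a i) with hI
    have hIsum : ∑ i ∈ I, a i = ∑ i ∈ Finset.univ.erase js, a i := by
      refine Finset.sum_subset (Finset.filter_subset _ _) ?_
      intro x hx hnx
      rw [hI, Finset.mem_filter] at hnx
      push_neg at hnx
      have := hnx hx
      linarith [ha_nn x]
    obtain ⟨P, hPI, hPlow, hPhigh, hPdens⟩ := exists_prefix a s I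
      (fun i hi => (Finset.mem_filter.mp hi).2) (fun i _ => hs_nn i)
      (11/32*A) (a l) (by linarith) (ha_nn l)
      (fun i hi => hlmax i (Finset.mem_filter.mp hi).1)
      (by rw [hIsum]; linarith [hMR])
    have hcost_pref : (∑ i ∈ P, s i) * (∑ i ∈ I, a i) ≤ (∑ i ∈ P, a i) * (∑ i ∈ I, s i) :=
      prefix_cost a s I P hPI hPdens
    set OP := P.biUnion (fun i => O ∩ G i) with hOP
    have hOPO : OP ⊆ O := by
      intro e he
      rw [hOP, Finset.mem_biUnion] at he
      obtain ⟨i, _, hi⟩ := he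
      exact (Finset.mem_inter.mp hi).1
    have hOPsum : ∑ e ∈ OP, w e = ∑ i ∈ P, a i := by
      rw [hOP]
      refine Finset.sum_biUnion ?_
      intro i hi j hj hij
      exact Finset.disjoint_of_subset_left Finset.inter_subset_right
        (Finset.disjoint_of_subset_right Finset.inter_subset_right (hdisj i j hij))
    have hOPval : (∑ i ∈ P, a i) ≤ v OP := by
      rw [← hOPsum]; exact hw2 OP hOPO
    obtain ⟨R, hRX, hRcap, hRlow⟩ := exists_trim v hv0 hsubins (A/2) (5/32*A)
      (by linarith) (by linarith) OP (fun e _ => helem e)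
    have hvR : 11/32*A ≤ v R := by
      have h32 : A/2 - 5/32*A = 11/32*A := by ring
      have : (11:ℝ)/32*A ≤ min (v OP) (A/2 - 5/32*A) :=
        le_min (by linarith) (by linarith)
      linarith [hRlow]
    have hcostR : totalCost G c R ≤ ∑ i ∈ P, s i := by
      unfold totalCost
      have hzero : ∀ j ∈ Finset.univ, j ∉ P → c j (R ∩ G j) = 0 := by
        intro j _ hjP
        have hRj : R ∩ G j = ∅ := by
          refine Finset.eq_empty_of_forall_notMem ?_
          intro e he
          obtain ⟨he1, he2⟩ := Finset.mem_inter.mp he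
          have := hRX he1
          rw [hOP, Finset.mem_biUnion] at this
          obtain ⟨i, hiP, hi⟩ := this
          have hiG := (Finset.mem_inter.mp hi).2
          by_cases hij : i = j
          · exact hjP (hij ▸ hiP)
          · exact Finset.disjoint_left.mp (hdisj i j hij) hiG he2
        rw [hRj, hc0 j]
      rw [← Finset.sum_subset (Finset.subset_univ P) hzero]
      refine Finset.sum_le_sum ?_
      intro i hiP
      refine hcmono i _ _ ?_ Finset.inter_subset_right
      exact Finset.inter_subset_inter (hRX.trans hOPO) (Finset.Subset.refl _)
    have hfA := hdemand R (hRX.trans hOPO) hRcap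
    have hfA2 : 11/32*A - A/(2*B) * (∑ i ∈ P, s i) ≤ v (Sstar ω) := by
      have hc2 : A/(2*B) * totalCost G c R ≤ A/(2*B) * (∑ i ∈ P, s i) :=
        mul_le_mul_of_nonneg_left hcostR hθ
      linarith
    have hfB : a l - A/(2*B) * s js ≤ v (Sstar ω) := by
      have h1 := hE1 js
      have hm : a l ≤ min (v (O ∩ G js)) (11/32*A) :=
        le_min (le_trans hnul (hmu l)) (le_of_lt hthin)
      linarith
    -- final arithmetic
    have hSI : (∑ i ∈ I, s i) ≤ B - s js := by
      have h1 : ∑ i ∈ I, s i ≤ ∑ i ∈ Finset.univ.erase js, s i :=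
        Finset.sum_le_sum_of_subset_of_nonneg (Finset.filter_subset _ _) (fun i _ _ => hs_nn i)
      have h2 : (∑ i ∈ Finset.univ.erase js, s i) + s js = ∑ i, s i :=
        Finset.sum_erase_add Finset.univ s (Finset.mem_univ js)
      rw [hs_sum] at h2
      linarith
    have hAI : A ≤ ∑ i ∈ I, a i := by rw [hIsum]; exact hMR
    have hSP0 : 0 ≤ ∑ i ∈ P, s i := Finset.sum_nonneg fun i _ => hs_nn i
    have hSI0 : 0 ≤ ∑ i ∈ I, s i := Finset.sum_nonneg fun i _ => hs_nn i
    have hsj0 : 0 ≤ s js := hs_nn js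
    have hal0 : 0 ≤ a l := ha_nn l
    -- SP * A ≤ (11/32 A + a l)(B - s js)
    have hSPA : (∑ i ∈ P, s i) * A ≤ (11/32*A + a l) * (B - s js) := by
      have h1 : (∑ i ∈ P, s i) * A ≤ (∑ i ∈ P, s i) * (∑ i ∈ I, a i) :=
        mul_le_mul_of_nonneg_left hAI hSP0
      have h2 : (∑ i ∈ P, a i) * (∑ i ∈ I, s i) ≤ (11/32*A + a l) * (B - s js) := by
        refine mul_le_mul hPhigh hSI hSI0 ?_
        linarith
      linarith [hcost_pref]
    exact key_arith A B (v (Sstar ω)) (a l) (s js) (∑ i ∈ P, s i) hB hApos hal0 hthin.le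
      hsj0 (by linarith [hs_nn l]) hSP0 hSPA hfA2 hfB
end keysec

/-- value guarantee of XOS-UniBF with `λ = 0.5`, `p = 0.8`. For a
monotone normalized XOS valuation, monotone normalized player costs with no-overbidding
(`c {e} ≤ B` for all `e`), `S*(ω)` any maximizer of `v S − (V₁(ω)/(2B))·c S` over
`{S ⊆ U₂(ω) : v S ≤ V₁(ω)/2}`, and `e*` a most valuable single item,
`E_ω[(4/5)·v (S* ω) + (1/5)·v {e*}] ≥ (1/80)·max{v S − 5·max_i v (S ∩ G_i) : c S ≤ B}`. -/
theorem stmt12 {n k : ℕ} (hk : 0 < k) (G : Fin k → Finset (Fin n))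
    (hdisj : ∀ i j : Fin k, i ≠ j → Disjoint (G i) (G j))
    (hcover : Finset.univ.biUnion G = (Finset.univ : Finset (Fin n)))
    (v : Finset (Fin n) → ℝ) (hv0 : v ∅ = 0) (hvnn : ∀ S, 0 ≤ v S)
    (hvmono : ∀ S T : Finset (Fin n), S ⊆ T → v S ≤ v T)
    -- XOS: every `S` has a supporting additive valuation
    (hxos : ∀ S : Finset (Fin n), ∃ w : Fin n → ℝ,
      (∑ e ∈ S, w e) = v S ∧ ∀ T ⊆ S, (∑ e ∈ T, w e) ≤ v T)
    (c : Fin k → Finset (Fin n) → ℝ)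
    (hc0 : ∀ i, c i ∅ = 0)
    (hcnn : ∀ i (S : Finset (Fin n)), S ⊆ G i → 0 ≤ c i S)
    (hcmono : ∀ i (S T : Finset (Fin n)), S ⊆ T → T ⊆ G i → c i S ≤ c i T)
    (B : ℝ) (hB : 0 < B)
    -- no-overbidding
    (hnob : ∀ e : Fin n, totalCost G c {e} ≤ B)
    -- `S*(ω)` is any maximizer of the constrained demand query on `U₂(ω)`
    (Sstar : (Fin k → Fin 2) → Finset (Fin n))
    (hSstar : ∀ ω, Sstar ω ⊆ sideSet G ω 1 ∧ v (Sstar ω) ≤ V1 G v c B ω / 2 ∧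
      ∀ S ⊆ sideSet G ω 1, v S ≤ V1 G v c B ω / 2 →
        v S - V1 G v c B ω / (2 * B) * totalCost G c S ≤
          v (Sstar ω) - V1 G v c B ω / (2 * B) * totalCost G c (Sstar ω))
    -- `e*` is a most valuable single item
    (estar : Fin n) (hestar : ∀ e : Fin n, v {e} ≤ v {estar}) :
    (∑ ω : Fin k → Fin 2, (4 / 5 * v (Sstar ω) + 1 / 5 * v {estar})) / 2 ^ k ≥
      1 / 80 * sSup {x : ℝ | ∃ S : Finset (Fin n), totalCost G c S ≤ B ∧
        x = v S - 5 * sSup {y : ℝ | ∃ i : Fin k, y = v (S ∩ G i)}} := by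
  classical
  -- attained benchmark optimum
  have hfin : {x : ℝ | ∃ S : Finset (Fin n), totalCost G c S ≤ B ∧
      x = v S - 5 * sSup {y : ℝ | ∃ i : Fin k, y = v (S ∩ G i)}}.Finite := by
    refine Set.Finite.subset (Set.finite_range (fun S : Finset (Fin n) =>
      v S - 5 * sSup {y : ℝ | ∃ i : Fin k, y = v (S ∩ G i)})) ?_
    rintro x ⟨S, _, rfl⟩; exact ⟨S, rfl⟩
  have hne : {x : ℝ | ∃ S : Finset (Fin n), totalCost G c S ≤ B ∧
      x = v S - 5 * sSup {y : ℝ | ∃ i : Fin k, y = v (S ∩ G i)}}.Nonempty := by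
    refine ⟨v (∅ : Finset (Fin n)) -
      5 * sSup {y : ℝ | ∃ i : Fin k, y = v ((∅ : Finset (Fin n)) ∩ G i)}, ∅, ?_, rfl⟩
    have : totalCost G c (∅ : Finset (Fin n)) = 0 := by simp [totalCost, hc0]
    rw [this]; linarith
  obtain ⟨S0, hS0c, hS0v⟩ := hne.csSup_mem hfin
  rw [ge_iff_le, hS0v]
  set m0 := sSup {y : ℝ | ∃ i : Fin k, y = v (S0 ∩ G i)} with hm0def
  have hm0eq : msup G v S0 = m0 := rfl
  have hm0i : ∀ i, v (S0 ∩ G i) ≤ m0 := by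
    intro i; rw [← hm0eq]; exact msup_ge G v S0 i
  have hm0nn : 0 ≤ m0 := by
    obtain ⟨i, hi⟩ := msup_attained hk G v S0
    rw [← hm0eq, hi]; exact hvnn _
  have hV0 : 0 ≤ v S0 := hvnn S0
  -- XOS weights for S0
  obtain ⟨w0, hw01, hw02⟩ := hxos S0
  set a : Fin k → ℝ := fun i => ∑ e ∈ S0 ∩ G i, w0 e with ha_def
  have ha_nn : ∀ i, 0 ≤ a i := fun i => Finset.sum_nonneg fun e he =>
    w_nonneg v hvmono S0 w0 hw01 hw02 e (Finset.mem_inter.mp he).1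
  have ha_le : ∀ i, a i ≤ v (S0 ∩ G i) := fun i => hw02 _ Finset.inter_subset_left
  have ha_m : ∀ i, a i ≤ m0 := fun i => le_trans (ha_le i) (hm0i i)
  have ha_sum : ∑ i, a i = v S0 := by
    rw [← hw01]; exact (sum_partition G hdisj hcover S0 w0).symm
  -- the sampled mass
  set W : (Fin k → Fin 2) → ℝ :=
    fun ω => ∑ i ∈ Finset.univ.filter (fun i => ω i = 0), a i with hWdef
  have hWbound : ∀ ω, W ω - m0 ≤ V1 G v c B ω := by
    intro ω
    have hsub : S0 ∩ sideSet G ω 0 ⊆ sideSet G ω 0 := Finset.inter_subset_right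
    have hcost : totalCost G c (S0 ∩ sideSet G ω 0) ≤ B :=
      le_trans (totalCost_mono G c hcmono _ _ Finset.inter_subset_left) hS0c
    have h1 : v (S0 ∩ sideSet G ω 0) - msup G v (S0 ∩ sideSet G ω 0) ≤ V1 G v c B ω :=
      V1_mem G v c B ω _ hsub hcost
    have h2 : W ω ≤ v (S0 ∩ sideSet G ω 0) := by
      have h3 := hw02 (S0 ∩ sideSet G ω 0) Finset.inter_subset_left
      have h4 : ∑ e ∈ S0 ∩ sideSet G ω 0, w0 e = W ω := by
        rw [sum_side G hdisj S0 ω 0 w0, hWdef]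
      linarith
    have h5 : msup G v (S0 ∩ sideSet G ω 0) ≤ m0 := by
      refine msup_le hk G v _ m0 ?_
      intro i
      refine le_trans (hvmono _ _ ?_) (hm0i i)
      exact Finset.inter_subset_inter Finset.inter_subset_left (Finset.Subset.refl _)
    linarith
  have hWflip : ∀ ω, W (flp ω) = v S0 - W ω := by
    intro ω
    have hsplit := Finset.sum_filter_add_sum_filter_not Finset.univ (fun i => ω i = 0) a
    rw [ha_sum] at hsplit
    have hfil : Finset.univ.filter (fun i => flp ω i = 0)
        = Finset.univ.filter (fun i => ¬ ω i = 0) := by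
      refine Finset.filter_congr ?_
      intro i _
      unfold flp
      rcases (show ω i = 0 ∨ ω i = 1 by omega) with h | h <;> simp [h]
    have : W (flp ω) = ∑ i ∈ Finset.univ.filter (fun i => ¬ ω i = 0), a i := by
      rw [hWdef]; dsimp only; rw [hfil]
    rw [this]
    have hWω : W ω = ∑ i ∈ Finset.univ.filter (fun i => ω i = 0), a i := rfl
    linarith
  -- lower bound for the paired benchmark
  have hminbd : ∀ ω, min (W ω) (v S0 - W ω) - m0
      ≤ min (V1 G v c B ω) (V1 G v c B (flp ω)) := by
    intro ω
    refine le_min ?_ ?_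
    · have := hWbound ω
      have h2 := min_le_left (W ω) (v S0 - W ω)
      linarith
    · have h1 := hWbound (flp ω)
      rw [hWflip ω] at h1
      have h2 := min_le_right (W ω) (v S0 - W ω)
      linarith
  -- per-ω guarantee
  have hperom : ∀ ω, min (V1 G v c B ω) (V1 G v c B (flp ω)) ≤
      64/5 * v (Sstar ω) + 64/5 * v (Sstar (flp ω)) + 32/5 * v {estar} := by
    intro ω
    have hnn1 : 0 ≤ v (Sstar ω) := vSstar_nonneg hk G v hv0 c hc0 hcnn B hB Sstar hSstar ω
    have hnn2 : 0 ≤ v (Sstar (flp ω)) :=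
      vSstar_nonneg hk G v hv0 c hc0 hcnn B hB Sstar hSstar (flp ω)
    rcases le_total (V1 G v c B ω) (V1 G v c B (flp ω)) with h | h
    · have hkey := key hk G hdisj hcover v hv0 hvnn hvmono hxos c hc0 hcnn hcmono B hB
        Sstar hSstar estar hestar ω h
      rw [min_eq_left h]
      linarith
    · have h' : V1 G v c B (flp ω) ≤ V1 G v c B (flp (flp ω)) := by rw [flp_flp]; exact h
      have hkey := key hk G hdisj hcover v hv0 hvnn hvmono hxos c hc0 hcnn hcmono B hB
        Sstar hSstar estar hestar (flp ω) h'
      rw [min_eq_right h]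
      linarith
  -- cardinality
  set N : ℝ := 2 ^ k with hNdef
  have hN : (0:ℝ) < N := by rw [hNdef]; positivity
  have hcard : ((Finset.univ : Finset (Fin k → Fin 2)).card : ℝ) = N := by
    rw [Finset.card_univ, hNdef]
    simp
  -- sum of the per-ω guarantees
  have hsum1 : ∑ ω : Fin k → Fin 2, min (V1 G v c B ω) (V1 G v c B (flp ω)) ≤
      128/5 * (∑ ω : Fin k → Fin 2, v (Sstar ω)) + 32/5 * N * v {estar} := by
    have h1 : ∑ ω : Fin k → Fin 2, min (V1 G v c B ω) (V1 G v c B (flp ω)) ≤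
        ∑ ω : Fin k → Fin 2,
          (64/5 * v (Sstar ω) + 64/5 * v (Sstar (flp ω)) + 32/5 * v {estar}) :=
      Finset.sum_le_sum fun ω _ => hperom ω
    have h2 : ∑ ω : Fin k → Fin 2,
        (64/5 * v (Sstar ω) + 64/5 * v (Sstar (flp ω)) + 32/5 * v {estar})
        = 64/5 * (∑ ω : Fin k → Fin 2, v (Sstar ω))
          + 64/5 * (∑ ω : Fin k → Fin 2, v (Sstar (flp ω))) + 32/5 * N * v {estar} := by
      rw [Finset.sum_add_distrib, Finset.sum_add_distrib, ← Finset.mul_sum, ← Finset.mul_sum,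
        Finset.sum_const, nsmul_eq_mul, hcard]
      ring
    have h3 : ∑ ω : Fin k → Fin 2, v (Sstar (flp ω)) = ∑ ω : Fin k → Fin 2, v (Sstar ω) :=
      sum_flp (fun ω => v (Sstar ω))
    rw [h2, h3] at h1
    linarith
  -- deviation analysis
  set D : (Fin k → Fin 2) → ℝ := fun ω => W ω - v S0 / 2 with hDdef
  have hDform : ∀ ω, D ω = ∑ i, a i * (if ω i = 0 then (1/2:ℝ) else -1/2) := by
    intro ω
    have hWω : W ω = ∑ i, (if ω i = 0 then a i else 0) := by
      rw [hWdef]; dsimp only; rw [Finset.sum_filter]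
    have hD : D ω = W ω - v S0/2 := rfl
    rw [hD, hWω, ← ha_sum, Finset.sum_div, ← Finset.sum_sub_distrib]
    refine Finset.sum_congr rfl fun i _ => ?_
    by_cases h : ω i = 0 <;> simp [h] <;> ring
  have hDsq : ∑ ω : Fin k → Fin 2, (D ω)^2 = N/4 * ∑ i, (a i)^2 := by
    have step1 : ∑ ω : Fin k → Fin 2, (D ω)^2
        = ∑ ω : Fin k → Fin 2, ∑ i, ∑ j, (a i * a j) *
            ((if ω i = 0 then (1/2:ℝ) else -1/2) * (if ω j = 0 then (1/2:ℝ) else -1/2)) := by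
      refine Finset.sum_congr rfl fun ω _ => ?_
      rw [hDform ω, sq, Finset.sum_mul_sum]
      refine Finset.sum_congr rfl fun i _ => ?_
      refine Finset.sum_congr rfl fun j _ => ?_
      ring
    have step2 : ∑ ω : Fin k → Fin 2, ∑ i, ∑ j, (a i * a j) *
            ((if ω i = 0 then (1/2:ℝ) else -1/2) * (if ω j = 0 then (1/2:ℝ) else -1/2))
        = ∑ i, ∑ j, (a i * a j) * (∑ ω : Fin k → Fin 2,
            ((if ω i = 0 then (1/2:ℝ) else -1/2) * (if ω j = 0 then (1/2:ℝ) else -1/2))) := by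
      rw [Finset.sum_comm]
      refine Finset.sum_congr rfl fun i _ => ?_
      rw [Finset.sum_comm]
      refine Finset.sum_congr rfl fun j _ => ?_
      exact (Finset.mul_sum _ _ _).symm
    have step3 : ∑ i, ∑ j, (a i * a j) * (∑ ω : Fin k → Fin 2,
            ((if ω i = 0 then (1/2:ℝ) else -1/2) * (if ω j = 0 then (1/2:ℝ) else -1/2)))
        = ∑ i, (a i * a i) * (N/4) := by
      refine Finset.sum_congr rfl fun i _ => ?_
      rw [Finset.sum_eq_single i]
      · congr 1
        have hval : ∀ ω : Fin k → Fin 2,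
            ((if ω i = 0 then (1/2:ℝ) else -1/2) * (if ω i = 0 then (1/2:ℝ) else -1/2))
              = 1/4 := by
          intro ω; by_cases h : ω i = 0 <;> simp [h] <;> norm_num
        rw [Finset.sum_congr rfl (fun ω _ => hval ω), Finset.sum_const, nsmul_eq_mul, hcard]
        ring
      · intro j _ hji
        rw [orth i j (Ne.symm hji), mul_zero]
      · intro h; exact absurd (Finset.mem_univ i) h
    rw [step1, step2, step3, Finset.mul_sum]
    refine Finset.sum_congr rfl fun i _ => ?_
    rw [sq]; ring
  have hCS : (∑ ω : Fin k → Fin 2, |D ω|)^2 ≤ N * ∑ ω : Fin k → Fin 2, (D ω)^2 := by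
    have h := Finset.sum_mul_sq_le_sq_mul_sq Finset.univ (fun _ => (1:ℝ)) (fun ω => |D ω|)
    simp only [one_mul, one_pow, Finset.sum_const, nsmul_eq_mul, mul_one, sq_abs] at h
    rw [hcard] at h
    exact h
  have hsqa : ∑ i, (a i)^2 ≤ m0 * v S0 := by
    have h1 : ∀ i : Fin k, (a i)^2 ≤ m0 * a i := by
      intro i
      rw [sq]
      exact mul_le_mul_of_nonneg_right (ha_m i) (ha_nn i)
    calc ∑ i, (a i)^2 ≤ ∑ i, m0 * a i := Finset.sum_le_sum fun i _ => h1 i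
      _ = m0 * v S0 := by rw [← Finset.mul_sum, ha_sum]
  have habs_nn : 0 ≤ ∑ ω : Fin k → Fin 2, |D ω| :=
    Finset.sum_nonneg fun ω _ => abs_nonneg _
  have hXs : ∑ ω : Fin k → Fin 2, |D ω| ≤ N * (v S0/10 + m0) := by
    have h1 : (∑ ω : Fin k → Fin 2, |D ω|)^2 ≤ (N * (v S0/10 + m0))^2 := by
      have h2 : N * ∑ ω : Fin k → Fin 2, (D ω)^2 ≤ N * (N/4 * (m0 * v S0)) := by
        rw [hDsq]
        have : N/4 * ∑ i, (a i)^2 ≤ N/4 * (m0 * v S0) :=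
          mul_le_mul_of_nonneg_left hsqa (by positivity)
        exact mul_le_mul_of_nonneg_left this hN.le
      have h3 : N * (N/4 * (m0 * v S0)) ≤ (N * (v S0/10 + m0))^2 := by
        nlinarith [sq_nonneg (v S0/10 - m0), mul_pos hN hN, hm0nn, hV0,
          mul_nonneg hm0nn hV0]
      linarith [hCS]
    have h4 : 0 ≤ N * (v S0/10 + m0) := by positivity
    exact le_of_pow_le_pow_left₀ two_ne_zero h4 h1
  have hminabs : ∀ ω, min (W ω) (v S0 - W ω) = v S0/2 - |D ω| := by
    intro ω
    have hD : D ω = W ω - v S0/2 := rfl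
    rcases le_total (W ω) (v S0 - W ω) with h | h
    · rw [min_eq_left h, hD, abs_of_nonpos (by linarith)]
      ring
    · rw [min_eq_right h, hD, abs_of_nonneg (by linarith)]
      ring
  -- chain everything
  have hchain : N * (2/5 * v S0 - 2 * m0) ≤
      ∑ ω : Fin k → Fin 2, min (V1 G v c B ω) (V1 G v c B (flp ω)) := by
    have h1 : ∑ ω : Fin k → Fin 2, (min (W ω) (v S0 - W ω) - m0) ≤
        ∑ ω : Fin k → Fin 2, min (V1 G v c B ω) (V1 G v c B (flp ω)) :=
      Finset.sum_le_sum fun ω _ => hminbd ω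
    have h2 : ∑ ω : Fin k → Fin 2, (min (W ω) (v S0 - W ω) - m0)
        = N * (v S0/2 - m0) - ∑ ω : Fin k → Fin 2, |D ω| := by
      have h3 : ∀ ω, min (W ω) (v S0 - W ω) - m0 = (v S0/2 - m0) - |D ω| := by
        intro ω; rw [hminabs ω]; ring
      rw [Finset.sum_congr rfl (fun ω _ => h3 ω), Finset.sum_sub_distrib,
        Finset.sum_const, nsmul_eq_mul, hcard]
    rw [h2] at h1
    have h4 : N * (2/5 * v S0 - 2 * m0) ≤ N * (v S0/2 - m0) - ∑ ω : Fin k → Fin 2, |D ω| := by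
      have := hXs
      nlinarith [hN]
    linarith
  -- final computation
  have hsumF : ∑ ω : Fin k → Fin 2, (4/5 * v (Sstar ω) + 1/5 * v {estar})
      = 4/5 * (∑ ω : Fin k → Fin 2, v (Sstar ω)) + N/5 * v {estar} := by
    rw [Finset.sum_add_distrib, ← Finset.mul_sum, Finset.sum_const, nsmul_eq_mul, hcard]
    ring
  rw [le_div_iff₀ hN]
  rw [hsumF]
  have hfinal : N * ((v S0 - 5*m0)/80) ≤
      4/5 * (∑ ω : Fin k → Fin 2, v (Sstar ω)) + N/5 * v {estar} := by
    linarith [hsum1, hchain]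
  calc 1/80 * (v S0 - 5 * m0) * N = N * ((v S0 - 5*m0)/80) := by ring
    _ ≤ _ := hfinal
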